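/- Let T be a tree satisfying Σ_{uv ∈ E(T)}(d_u + d_v) = 4|E(T)| and let T_s be its s-th subdivision (s ≥ 1). If (T_s)' is obtained from T_s by inserting one additional vertex into a single arbitrarily chosen edge of T_s, then (T_s)' also has assortativity coefficient zero, i.e. 4m' · Σ_{ij ∈ E'} d_i d_j = (Σ_{ij ∈ E'}(d_i + d_j))² where m' = |E'|. -/

import Mathlib

open Finset

attribute [local instance] Classical.propDecidable

namespace Neutral

/-- Number of edges of `G`. -/
noncomputable def m {V : Type*} [Fintype V] (G : SimpleGraph V) : ℕ :=
  G.edgeFinset.card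

/-- `∑_{uv ∈ E} d_u · d_v`, each edge counted once. -/
noncomputable def dd {V : Type*} [Fintype V] (G : SimpleGraph V) : ℕ :=
  ∑ e ∈ G.edgeFinset,
    Sym2.lift ⟨fun u v => G.degree u * G.degree v, fun _ _ => Nat.mul_comm _ _⟩ e

/-- `∑_{uv ∈ E} (d_u + d_v)`, each edge counted once. -/
noncomputable def ds {V : Type*} [Fintype V] (G : SimpleGraph V) : ℕ :=
  ∑ e ∈ G.edgeFinset,
    Sym2.lift ⟨fun u v => G.degree u + G.degree v, fun _ _ => Nat.add_comm _ _⟩ e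

/-- `∑_{uv ∈ E} (d_u² + d_v²)`, each edge counted once. -/
noncomputable def dsq {V : Type*} [Fintype V] (G : SimpleGraph V) : ℕ :=
  ∑ e ∈ G.edgeFinset,
    Sym2.lift ⟨fun u v => G.degree u ^ 2 + G.degree v ^ 2, fun _ _ => Nat.add_comm _ _⟩ e

/-- A graph is irregular if it is not regular of any degree. -/
def Irregular {V : Type*} [Fintype V] (G : SimpleGraph V) : Prop :=
  ¬ ∃ k, G.IsRegularOfDegree k

end Neutral

open Neutral

namespace Neutral

/-- A chosen pair of endpoints of an unordered edge. -/
noncomputable def ends {V : Type*} (e : Sym2 V) : V × V :=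
  Classical.choose (Quot.exists_rep e)

/-- One-directional adjacency used to build the `s`-th subdivision graph:
the new vertices `(e,0), …, (e,s-1)` inserted on the edge `e` form a path joining
the two endpoints of `e`. -/
def subS {V : Type*} (G : SimpleGraph V) (s : ℕ) :
    (V ⊕ (G.edgeSet × Fin s)) → (V ⊕ (G.edgeSet × Fin s)) → Prop
  | Sum.inl u, Sum.inr (e, i) =>
      (i.val = 0 ∧ u = (ends (e : Sym2 V)).1) ∨ (i.val = s - 1 ∧ u = (ends (e : Sym2 V)).2)
  | Sum.inr (e, i), Sum.inr (f, j) => e = f ∧ i.val + 1 = j.val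
  | _, _ => False

/-- The `s`-th subdivision graph `G_s`: every edge of `G` is subdivided by `s` new
vertices. -/
noncomputable def Subdiv {V : Type*} (G : SimpleGraph V) (s : ℕ) :
    SimpleGraph (V ⊕ (G.edgeSet × Fin s)) where
  Adj x y := x ≠ y ∧ (subS G s x y ∨ subS G s y x)
  symm := ⟨fun _ _ h => ⟨Ne.symm h.1, h.2.symm⟩⟩
  loopless := ⟨fun _ h => h.1 rfl⟩

end Neutral

namespace Neutral

/-- One-directional adjacency for the single-edge division graph: the chosen edge `e`
is removed and a new vertex is joined to its two endpoints; all other edges remain. -/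
def sdS {W : Type*} (H : SimpleGraph W) (e : Sym2 W) :
    (W ⊕ Unit) → (W ⊕ Unit) → Prop
  | Sum.inl u, Sum.inl v => H.Adj u v ∧ s(u, v) ≠ e
  | Sum.inl u, Sum.inr _ => u ∈ e
  | _, _ => False

/-- The single-edge division graph `G'`, obtained by inserting one new vertex into a
single chosen edge `e` of `H`. -/
def SingleDiv {W : Type*} (H : SimpleGraph W) (e : Sym2 W) :
    SimpleGraph (W ⊕ Unit) where
  Adj x y := x ≠ y ∧ (sdS H e x y ∨ sdS H e y x)
  symm := ⟨fun _ _ h => ⟨Ne.symm h.1, h.2.symm⟩⟩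
  loopless := ⟨fun _ h => h.1 rfl⟩

end Neutral

/-! On every edge of `T_s` one endpoint is a subdivision vertex of degree 2, and inserting a
further vertex into an edge keeps this true. On such a graph `(d_u - 2)(d_v - 2) = 0` on each
edge, so `∑ d_u d_v = 2 ∑ (d_u + d_v) - 4m`. Since `∑ (d_u + d_v) = ∑ d_v²`, each new degree-2
vertex adds 4 both to `∑ (d_u + d_v)` and to `4m`; hence `∑ (d_u + d_v) = 4m` passes from `T` to
`T_s` and on to `(T_s)'`, where then also `∑ d_u d_v = 4m`, and `4m · 4m = (4m)²`. -/

namespace Neutral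

open SimpleGraph

section EdgeSums

variable {V : Type*} [Fintype V] (G : SimpleGraph V)

theorem sum_edgeFinset_lift_add_eq_sum_degree_smul {M : Type*} [AddCommMonoid M] (f : V → M) :
    ∑ e ∈ G.edgeFinset, Sym2.lift ⟨fun u v => f u + f v, fun _ _ => add_comm _ _⟩ e =
      ∑ v, G.degree v • f v := by
  have hdart : ∑ d : G.Dart, f d.fst = ∑ v, G.degree v • f v := by
    rw [← Finset.sum_fiberwise_of_maps_to (g := fun d : G.Dart => d.fst) (t := univ)
      (fun _ _ => mem_univ _)]
    refine Finset.sum_congr rfl fun v _ => ?_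
    rw [Finset.sum_congr rfl fun d hd => by rw [(Finset.mem_filter.mp hd).2],
      Finset.sum_const]
    congr 1
    convert G.dart_fst_fiber_card_eq_degree v
  rw [← hdart, ← Finset.sum_fiberwise_of_maps_to (g := Dart.edge) (t := G.edgeFinset)
    (fun d _ => G.mem_edgeFinset.mpr d.edge_mem)]
  refine Finset.sum_congr rfl fun e he => ?_
  induction e using Sym2.ind with
  | _ u v =>
    let d : G.Dart := ⟨(u, v), G.mem_edgeFinset.mp he⟩
    rw [show ({d' : G.Dart | d'.edge = s(u, v)} : Finset _) = {d, d.symm} from d.edge_fiber,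
      Finset.sum_pair d.symm_ne.symm]
    rfl

theorem ds_eq_sum_degree_sq : ds G = ∑ v, G.degree v ^ 2 := by
  simp only [ds, sum_edgeFinset_lift_add_eq_sum_degree_smul, smul_eq_mul, sq]

theorem two_mul_m_eq_sum_degrees : 2 * m G = ∑ v, G.degree v :=
  (G.sum_degrees_eq_twice_card_edges).symm

def DegreeTwoVerticesCoverEdges : Prop :=
  ∀ e ∈ G.edgeSet, ∃ v ∈ e, G.degree v = 2

variable {G} in
theorem DegreeTwoVerticesCoverEdges.dd_add_four_mul_m (hG : DegreeTwoVerticesCoverEdges G) :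
    dd G + 4 * m G = 2 * ds G := by
  rw [dd, ds, m, Finset.card_eq_sum_ones, Finset.mul_sum, Finset.mul_sum,
    ← Finset.sum_add_distrib]
  refine Finset.sum_congr rfl fun e he => ?_
  obtain ⟨w, hw, hw2⟩ := hG e (G.mem_edgeFinset.mp he)
  induction e using Sym2.ind with
  | _ u v =>
    rcases Sym2.mem_iff.mp hw with rfl | rfl <;> simp only [Sym2.lift_mk, hw2] <;> ring

end EdgeSums

section SingleDivision

variable {W : Type*} {H : SimpleGraph W} {e : Sym2 W}

@[simp]
theorem singleDiv_adj_inl_inl {u v : W} :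
    (SingleDiv H e).Adj (Sum.inl u) (Sum.inl v) ↔ H.Adj u v ∧ s(u, v) ≠ e := by
  refine ⟨fun ⟨_, h⟩ => h.elim id fun h => ⟨h.1.symm, Sym2.eq_swap ▸ h.2⟩,
    fun h => ⟨fun huv => h.1.ne (Sum.inl.inj huv), Or.inl h⟩⟩

@[simp]
theorem singleDiv_adj_inl_inr {u : W} {t : Unit} :
    (SingleDiv H e).Adj (Sum.inl u) (Sum.inr t) ↔ u ∈ e :=
  ⟨fun ⟨_, h⟩ => h.elim id False.elim, fun h => ⟨Sum.inl_ne_inr, Or.inl h⟩⟩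

@[simp]
theorem singleDiv_not_adj_inr_inr {t t' : Unit} :
    ¬ (SingleDiv H e).Adj (Sum.inr t) (Sum.inr t') := by
  rintro ⟨-, h | h⟩ <;> exact h

variable [Fintype W]

theorem degree_singleDiv_inl (he : e ∈ H.edgeSet) (v : W) :
    (SingleDiv H e).degree (Sum.inl v) = H.degree v := by
  rw [← card_neighborFinset_eq_degree, ← card_neighborFinset_eq_degree]
  symm
  refine Finset.card_bij (fun u _ => if s(v, u) = e then Sum.inr () else Sum.inl u)
    (fun u hu => ?_) (fun u₁ _ u₂ _ h => ?_) (fun x hx => ?_)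
  · rw [mem_neighborFinset] at hu ⊢
    split_ifs with hvu
    · simp [← hvu]
    · simpa using ⟨hu, hvu⟩
  · split_ifs at h with h₁ h₂ h₂
    · exact Sym2.congr_right.mp (h₁.trans h₂.symm)
    all_goals simp_all
  · rw [mem_neighborFinset] at hx
    rcases x with u | ⟨⟩
    · obtain ⟨hvu, hne⟩ := singleDiv_adj_inl_inl.mp hx
      exact ⟨u, (mem_neighborFinset _ _ _).mpr hvu, if_neg hne⟩
    · have hv : v ∈ e := singleDiv_adj_inl_inr.mp hx
      refine ⟨Sym2.Mem.other hv, (mem_neighborFinset _ _ _).mpr ?_, if_pos (Sym2.other_spec hv)⟩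
      rw [← mem_edgeSet, Sym2.other_spec hv]
      exact he

theorem degree_singleDiv_inr (he : e ∈ H.edgeSet) (t : Unit) :
    (SingleDiv H e).degree (Sum.inr t) = 2 := by
  induction e using Sym2.ind with
  | _ a b =>
    rw [← card_neighborFinset_eq_degree, Finset.card_eq_two]
    refine ⟨Sum.inl a, Sum.inl b, by simpa using H.ne_of_adj he, ?_⟩
    ext (u | ⟨⟩) <;> simp [adj_comm]

theorem m_singleDiv (he : e ∈ H.edgeSet) : m (SingleDiv H e) = m H + 1 := by
  have h := two_mul_m_eq_sum_degrees (SingleDiv H e)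
  rw [Fintype.sum_sum_type] at h
  simp only [degree_singleDiv_inl he, degree_singleDiv_inr he, ← two_mul_m_eq_sum_degrees,
    Finset.univ_unique, Finset.sum_singleton] at h
  omega

theorem ds_singleDiv (he : e ∈ H.edgeSet) : ds (SingleDiv H e) = ds H + 4 := by
  simp only [ds_eq_sum_degree_sq, Fintype.sum_sum_type, degree_singleDiv_inl he,
    degree_singleDiv_inr he, Finset.univ_unique, Finset.sum_singleton]
  norm_num

theorem DegreeTwoVerticesCoverEdges.singleDiv (hH : DegreeTwoVerticesCoverEdges H)
    (he : e ∈ H.edgeSet) : DegreeTwoVerticesCoverEdges (SingleDiv H e) := by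
  intro f hf
  induction f using Sym2.ind with
  | _ x y =>
    rcases x with u | ⟨⟩ <;> rcases y with v | ⟨⟩
    · obtain ⟨w, hw, hw2⟩ := hH s(u, v) (singleDiv_adj_inl_inl.mp hf).1
      refine ⟨Sum.inl w, ?_, by rwa [degree_singleDiv_inl he]⟩
      rcases Sym2.mem_iff.mp hw with rfl | rfl <;> simp
    all_goals exact ⟨Sum.inr (), by simp, degree_singleDiv_inr he _⟩

end SingleDivision

section Subdivision

variable {V : Type*} {T : SimpleGraph V} {s : ℕ}

theorem ends_spec (e : Sym2 V) : s((ends e).1, (ends e).2) = e :=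
  Classical.choose_spec (Quot.exists_rep e)

theorem ends_adj (e : T.edgeSet) : T.Adj (ends (e : Sym2 V)).1 (ends (e : Sym2 V)).2 := by
  rw [← mem_edgeSet, ends_spec]
  exact e.2

@[simp]
theorem subdiv_not_adj_inl_inl {u v : V} : ¬ (Subdiv T s).Adj (Sum.inl u) (Sum.inl v) := by
  rintro ⟨-, h | h⟩ <;> exact h

@[simp]
theorem subdiv_adj_inl_inr {u : V} {e : T.edgeSet} {i : Fin s} :
    (Subdiv T s).Adj (Sum.inl u) (Sum.inr (e, i)) ↔
      (i.val = 0 ∧ u = (ends (e : Sym2 V)).1) ∨ (i.val = s - 1 ∧ u = (ends (e : Sym2 V)).2) :=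
  ⟨fun ⟨_, h⟩ => h.elim id False.elim, fun h => ⟨Sum.inl_ne_inr, Or.inl h⟩⟩

@[simp]
theorem subdiv_adj_inr_inr {e f : T.edgeSet} {i j : Fin s} :
    (Subdiv T s).Adj (Sum.inr (e, i)) (Sum.inr (f, j)) ↔
      e = f ∧ (i.val + 1 = j.val ∨ j.val + 1 = i.val) := by
  constructor
  · rintro ⟨-, ⟨hef, hij⟩ | ⟨hfe, hji⟩⟩
    exacts [⟨hef, Or.inl hij⟩, ⟨hfe.symm, Or.inr hji⟩]
  · rintro ⟨rfl, hij | hji⟩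
    · exact ⟨fun h => by simp [Fin.ext_iff] at h; omega, Or.inl ⟨rfl, hij⟩⟩
    · exact ⟨fun h => by simp [Fin.ext_iff] at h; omega, Or.inr ⟨rfl, hji⟩⟩

variable [Fintype V]

theorem degree_subdiv_inr (e : T.edgeSet) (i : Fin s) :
    (Subdiv T s).degree (Sum.inr (e, i)) = 2 := by
  rw [← card_neighborFinset_eq_degree, Finset.card_eq_two]
  have hi := i.isLt
  refine ⟨if i.val = 0 then Sum.inl (ends (e : Sym2 V)).1
      else Sum.inr (e, ⟨i.val - 1, by omega⟩),
    if h : i.val = s - 1 then Sum.inl (ends (e : Sym2 V)).2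
      else Sum.inr (e, ⟨i.val + 1, by omega⟩), ?_, ?_⟩
  · have := (ends_adj e).ne
    split_ifs <;> simp [Fin.ext_iff, this]
  · ext (u | ⟨f, j⟩)
    · simp only [mem_neighborFinset, adj_comm, subdiv_adj_inl_inr, Finset.mem_insert,
        Finset.mem_singleton]
      split_ifs <;> simp <;> tauto
    · have hj := j.isLt
      rcases eq_or_ne e f with rfl | hef
      · simp only [mem_neighborFinset, subdiv_adj_inr_inr, Finset.mem_insert,
          Finset.mem_singleton]
        split_ifs <;> simp [Fin.ext_iff] <;> omega
      · simp only [mem_neighborFinset, subdiv_adj_inr_inr, Finset.mem_insert,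
          Finset.mem_singleton, hef, false_and, false_iff]
        split_ifs <;> simp [Ne.symm hef]

theorem degree_subdiv_inl (hs : 1 ≤ s) (v : V) :
    (Subdiv T s).degree (Sum.inl v) = T.degree v := by
  rw [← card_neighborFinset_eq_degree, ← card_neighborFinset_eq_degree]
  symm
  refine Finset.card_bij (fun u hu => Sum.inr (⟨s(v, u), (mem_neighborFinset _ _ _).mp hu⟩,
      if (ends s(v, u)).1 = v then ⟨0, hs⟩ else ⟨s - 1, by omega⟩))
    (fun u hu => ?_) (fun u₁ _ u₂ _ h => ?_) (fun x hx => ?_)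
  · rw [mem_neighborFinset, subdiv_adj_inl_inr]
    split_ifs with h
    · exact Or.inl ⟨rfl, h.symm⟩
    · refine Or.inr ⟨rfl, ?_⟩
      rcases Sym2.eq_iff.mp (ends_spec s(v, u)) with ⟨hv, -⟩ | ⟨-, hv⟩
      exacts [absurd hv h, hv.symm]
  · simp only [Sum.inr.injEq, Prod.mk.injEq] at h
    exact Sym2.congr_right.mp (congrArg Subtype.val h.1)
  · rw [mem_neighborFinset] at hx
    rcases x with u | ⟨E, i⟩
    · exact absurd hx subdiv_not_adj_inl_inl
    · have hvE : v ∈ (E : Sym2 V) := by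
        rw [← ends_spec (E : Sym2 V)]
        rcases subdiv_adj_inl_inr.mp hx with ⟨-, rfl⟩ | ⟨-, rfl⟩ <;> simp
      have hE : s(v, Sym2.Mem.other hvE) = E := Sym2.other_spec hvE
      refine ⟨Sym2.Mem.other hvE, (mem_neighborFinset _ _ _).mpr ?_, ?_⟩
      · rw [← mem_edgeSet, hE]
        exact E.2
      · have hne := (ends_adj E).ne
        simp only [hE, Sum.inr.injEq, Prod.mk.injEq, true_and, Fin.ext_iff]
        rcases subdiv_adj_inl_inr.mp hx with ⟨hi, rfl⟩ | ⟨hi, rfl⟩ <;> simp [hi, hne]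

theorem m_subdiv (hs : 1 ≤ s) : m (Subdiv T s) = (s + 1) * m T := by
  have h := two_mul_m_eq_sum_degrees (Subdiv T s)
  rw [Fintype.sum_sum_type, Fintype.sum_prod_type] at h
  simp only [degree_subdiv_inl hs, degree_subdiv_inr, ← two_mul_m_eq_sum_degrees,
    Finset.sum_const, Finset.card_univ, Fintype.card_fin, smul_eq_mul, card_edgeSet] at h
  unfold m at h ⊢
  linarith

theorem ds_subdiv (hs : 1 ≤ s) : ds (Subdiv T s) = ds T + 4 * s * m T := by
  simp only [ds_eq_sum_degree_sq, Fintype.sum_sum_type, Fintype.sum_prod_type,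
    degree_subdiv_inl hs, degree_subdiv_inr, Finset.sum_const, Finset.card_univ,
    Fintype.card_fin, smul_eq_mul, card_edgeSet, m]
  ring

theorem degreeTwoVerticesCoverEdges_subdiv :
    DegreeTwoVerticesCoverEdges (Subdiv T s) := by
  intro f hf
  induction f using Sym2.ind with
  | _ x y =>
    rcases x with u | p <;> rcases y with v | q
    · exact absurd hf subdiv_not_adj_inl_inl
    · exact ⟨Sum.inr q, by simp, degree_subdiv_inr q.1 q.2⟩
    all_goals exact ⟨Sum.inr p, by simp, degree_subdiv_inr p.1 p.2⟩

end Subdivision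

end Neutral

theorem stmt_5_general {V : Type*} [Fintype V] (T : SimpleGraph V)
    (h : ds T = 4 * m T) (s : ℕ) (hs : 1 ≤ s)
    (f : Sym2 (V ⊕ (T.edgeSet × Fin s))) (hf : f ∈ (Subdiv T s).edgeSet) :
    4 * m (SingleDiv (Subdiv T s) f) * dd (SingleDiv (Subdiv T s) f) =
      (ds (SingleDiv (Subdiv T s) f)) ^ 2 := by
  have hds : ds (SingleDiv (Subdiv T s) f) = 4 * m (SingleDiv (Subdiv T s) f) := by
    rw [ds_singleDiv hf, m_singleDiv hf, ds_subdiv hs, m_subdiv hs, h]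
    ring
  have hdd : dd (SingleDiv (Subdiv T s) f) = 4 * m (SingleDiv (Subdiv T s) f) := by
    have := (degreeTwoVerticesCoverEdges_subdiv.singleDiv hf).dd_add_four_mul_m
    omega
  rw [hds, hdd]
  ring

/-- if a tree `T` satisfies `∑(d_u+d_v) = 4|E|` and `T_s` is its `s`-th
subdivision (`s ≥ 1`), then the single-edge division `(T_s)'` of `T_s` at any edge also
has zero assortativity coefficient: `4m'·∑ d_i d_j = (∑(d_i+d_j))²`. -/
theorem stmt_5 {V : Type*} [Fintype V] (T : SimpleGraph V)
    (htree : T.IsTree) (h : ds T = 4 * m T) (s : ℕ) (hs : 1 ≤ s)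
    (f : Sym2 (V ⊕ (T.edgeSet × Fin s))) (hf : f ∈ (Subdiv T s).edgeSet) :
    4 * m (SingleDiv (Subdiv T s) f) * dd (SingleDiv (Subdiv T s) f) =
      (ds (SingleDiv (Subdiv T s) f)) ^ 2 :=
  stmt_5_general T h s hs f hf
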